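/- arXiv:1504.06418 — 4 statements merged into one kernel-verified Lean document; each statement's English description precedes it below -/
import Mathlib

section
/- Let (u_j)_{j∈J} be orthonormal unit vectors in a Hilbert space H with card J = N, and let (v_j)_{j∈J} be vectors in H with max_{j∈J} ‖u_j − v_j‖ ≤ ε, where ε ≤ √(1 + 1/(2N)) − 1. Then the Gram matrix G with entries G_{jk} = (v_j, v_k)_H has all eigenvalues bounded below by a positive number; in particular the family (v_j)_{j∈J} is linearly independent. -/
open scoped RealInnerProductSpace

private lemma key_lower {H : Type*} [NormedAddCommGroup H] [InnerProductSpace ℝ H]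
    {J : Type*} [Fintype J] [DecidableEq J] (u v : J → H) (hu : Orthonormal ℝ u)
    {ε : ℝ} (hε0 : 0 ≤ ε) (hclose : ∀ j, ‖u j - v j‖ ≤ ε) (x : J → ℝ) :
    (1 - ε * Real.sqrt (Fintype.card J)) * Real.sqrt (∑ j, x j ^ 2) ≤ ‖∑ j, x j • v j‖ := by
  classical
  set S : ℝ := Real.sqrt (∑ j, x j ^ 2) with hSdef
  have hSnn : 0 ≤ S := Real.sqrt_nonneg _
  have hSsq : S ^ 2 = ∑ j, x j ^ 2 := Real.sq_sqrt (by positivity)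
  -- norm of the orthonormal combination
  have hA : ‖∑ j, x j • u j‖ = S := by
    have h1 : ⟪∑ j, x j • u j, ∑ j, x j • u j⟫ = ∑ j, x j * x j := by
      simpa using hu.inner_sum x x Finset.univ
    have h2 : ‖∑ j, x j • u j‖ ^ 2 = ∑ j, x j ^ 2 := by
      rw [← real_inner_self_eq_norm_sq, h1]
      exact Finset.sum_congr rfl fun j _ => (sq (x j)).symm
    have := congrArg Real.sqrt h2
    rwa [Real.sqrt_sq (norm_nonneg _)] at this
  -- bound on the error term
  have habs : ∑ j, |x j| ≤ Real.sqrt (Fintype.card J) * S := by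
    have h1 : (∑ j, |x j|) ^ 2 ≤ (Fintype.card J : ℝ) * ∑ j, x j ^ 2 := by
      have := sq_sum_le_card_mul_sum_sq (s := (Finset.univ : Finset J))
        (f := fun j => |x j|)
      simpa [sq_abs] using this
    have h2 := Real.sqrt_le_sqrt h1
    rwa [Real.sqrt_sq (by positivity), Real.sqrt_mul (by positivity)] at h2
  have hB : ‖∑ j, x j • (u j - v j)‖ ≤ ε * (Real.sqrt (Fintype.card J) * S) := by
    calc ‖∑ j, x j • (u j - v j)‖ ≤ ∑ j, ‖x j • (u j - v j)‖ := norm_sum_le _ _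
      _ = ∑ j, |x j| * ‖u j - v j‖ := by
          simp [norm_smul, Real.norm_eq_abs]
      _ ≤ ∑ j, |x j| * ε := by
          refine Finset.sum_le_sum fun j _ => ?_
          exact mul_le_mul_of_nonneg_left (hclose j) (abs_nonneg _)
      _ = ε * ∑ j, |x j| := by rw [← Finset.sum_mul, mul_comm]
      _ ≤ ε * (Real.sqrt (Fintype.card J) * S) :=
          mul_le_mul_of_nonneg_left habs hε0
  have hsplit : ∑ j, x j • v j = (∑ j, x j • u j) - ∑ j, x j • (u j - v j) := by
    rw [← Finset.sum_sub_distrib]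
    refine Finset.sum_congr rfl fun j _ => ?_
    rw [← smul_sub]
    congr 1
    abel
  calc (1 - ε * Real.sqrt (Fintype.card J)) * S
      = S - ε * (Real.sqrt (Fintype.card J) * S) := by ring
    _ ≤ ‖∑ j, x j • u j‖ - ‖∑ j, x j • (u j - v j)‖ := by
        rw [hA]; linarith
    _ ≤ ‖(∑ j, x j • u j) - ∑ j, x j • (u j - v j)‖ := norm_sub_norm_le _ _
    _ = ‖∑ j, x j • v j‖ := by rw [← hsplit]

theorem stmt_1 {H : Type*} [NormedAddCommGroup H] [InnerProductSpace ℝ H]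
    {J : Type*} [Fintype J] [DecidableEq J] (u v : J → H) (hu : Orthonormal ℝ u)
    (hnorm : ∀ j, ‖u j‖ = 1) (ε : ℝ)
    (hε : ε ≤ Real.sqrt (1 + 1 / (2 * (Fintype.card J : ℝ))) - 1)
    (hclose : ∀ j, ‖u j - v j‖ ≤ ε)
    (G : Matrix J J ℝ) (hG : ∀ j k, G j k = ⟪v j, v k⟫) :
    (∃ c : ℝ, 0 < c ∧ ∀ μ ∈ spectrum ℝ G, c ≤ μ) ∧ LinearIndependent ℝ v := by
  classical
  rcases isEmpty_or_nonempty J with hJ | hJ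
  · refine ⟨⟨1, one_pos, fun μ hμ => ?_⟩, linearIndependent_empty_type⟩
    rw [spectrum.mem_iff] at hμ
    exact absurd (isUnit_of_subsingleton _) hμ
  · have hN1 : (1 : ℝ) ≤ (Fintype.card J : ℝ) := by
      exact_mod_cast Fintype.card_pos
    set N : ℝ := (Fintype.card J : ℝ) with hNdef
    have hN0 : 0 < N := lt_of_lt_of_le one_pos hN1
    have hε0 : 0 ≤ ε := le_trans (norm_nonneg _) (hclose (Classical.arbitrary J))
    -- ε ≤ 1/(4N)
    have hεsmall : ε ≤ 1 / (4 * N) := by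
      have h1 : Real.sqrt (1 + 1 / (2 * N)) ≤ 1 + 1 / (4 * N) := by
        have h2 : 1 + 1 / (2 * N) ≤ (1 + 1 / (4 * N)) ^ 2 := by
          have : (1 + 1 / (4 * N)) ^ 2 = 1 + 1 / (2 * N) + (1 / (4 * N)) ^ 2 := by
            field_simp; ring
          nlinarith [sq_nonneg (1 / (4 * N))]
        calc Real.sqrt (1 + 1 / (2 * N)) ≤ Real.sqrt ((1 + 1 / (4 * N)) ^ 2) :=
              Real.sqrt_le_sqrt h2
          _ = 1 + 1 / (4 * N) := Real.sqrt_sq (by positivity)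
      linarith
    have hsqrtN : Real.sqrt N ≤ N := by
      calc Real.sqrt N ≤ Real.sqrt (N * N) := Real.sqrt_le_sqrt (by nlinarith)
        _ = N := by rw [← sq, Real.sqrt_sq hN0.le]
    have hεN : ε * Real.sqrt N ≤ 1 / 4 := by
      have h1 : ε * Real.sqrt N ≤ (1 / (4 * N)) * N :=
        mul_le_mul hεsmall hsqrtN (Real.sqrt_nonneg _) (by positivity)
      have h2 : (1 / (4 * N)) * N = 1 / 4 := by field_simp
      linarith
    have hpos : 0 < 1 - ε * Real.sqrt N := by linarith
    have key := key_lower u v hu hε0 hclose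
    -- quadratic form identity
    have hq : ∀ x : J → ℝ, ∑ j, x j * G.mulVec x j = ‖∑ j, x j • v j‖ ^ 2 := by
      intro x
      rw [← real_inner_self_eq_norm_sq]
      simp only [Matrix.mulVec, dotProduct, hG, sum_inner, inner_sum,
        real_inner_smul_left, real_inner_smul_right, Finset.mul_sum]
      refine Finset.sum_congr rfl fun j _ => Finset.sum_congr rfl fun k _ => by
        rw [real_inner_comm (v k) (v j)]; ring
    refine ⟨⟨(1 - ε * Real.sqrt N) ^ 2, by positivity, fun μ hμ => ?_⟩, ?_⟩
    · rw [← AlgEquiv.spectrum_eq (Matrix.toLinAlgEquiv (Pi.basisFun ℝ J)) G,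
        ← Module.End.hasEigenvalue_iff_mem_spectrum] at hμ
      obtain ⟨x, hx⟩ := hμ.exists_hasEigenvector
      have hxne : x ≠ 0 := hx.right
      have hmv : G.mulVec x = μ • x := by
        have h := hx.apply_eq_smul
        rw [Matrix.toLinAlgEquiv_apply] at h
        funext i
        have h2 := congrFun h i
        simpa [(funext (Pi.basisFun_repr (x := x)) : ⇑((Pi.basisFun ℝ J).repr x) = x), Pi.basisFun_apply, Finset.sum_apply, Pi.single_apply,
          Finset.sum_ite_eq'] using h2
      have hsum : ∑ j, x j * G.mulVec x j = μ * ∑ j, x j ^ 2 := by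
        rw [hmv, Finset.mul_sum]
        exact Finset.sum_congr rfl fun j _ => by simp [sq]; ring
      have hxpos : 0 < ∑ j, x j ^ 2 := by
        obtain ⟨j, hj⟩ := Function.ne_iff.mp hxne
        exact Finset.sum_pos' (fun i _ => sq_nonneg _)
          ⟨j, Finset.mem_univ j, pow_two_pos_of_ne_zero hj⟩
      have hge : (1 - ε * Real.sqrt N) ^ 2 * (∑ j, x j ^ 2) ≤ μ * ∑ j, x j ^ 2 := by
        rw [← hsum, hq x]
        have h1 := key x
        have h2 : ((1 - ε * Real.sqrt N) * Real.sqrt (∑ j, x j ^ 2)) ^ 2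
            ≤ ‖∑ j, x j • v j‖ ^ 2 := by
          apply sq_le_sq' <;> nlinarith [norm_nonneg (∑ j, x j • v j),
            mul_nonneg hpos.le (Real.sqrt_nonneg (∑ j, x j ^ 2))]
        calc (1 - ε * Real.sqrt N) ^ 2 * (∑ j, x j ^ 2)
            = ((1 - ε * Real.sqrt N) * Real.sqrt (∑ j, x j ^ 2)) ^ 2 := by
              rw [mul_pow, Real.sq_sqrt (by positivity)]
          _ ≤ ‖∑ j, x j • v j‖ ^ 2 := h2
      exact le_of_mul_le_mul_right hge hxpos
    · rw [Fintype.linearIndependent_iff]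
      intro g hg j
      have h1 := key g
      rw [hg, norm_zero] at h1
      have h2 : Real.sqrt (∑ j, g j ^ 2) ≤ 0 := by
        by_contra h
        push_neg at h
        nlinarith
      have hz : Real.sqrt (∑ j, g j ^ 2) = 0 := le_antisymm h2 (Real.sqrt_nonneg _)
      have h3 : ∑ j, g j ^ 2 = 0 :=
        le_antisymm (Real.sqrt_eq_zero'.mp hz)
          (Finset.sum_nonneg fun i _ => sq_nonneg (g i))
      have := (Finset.sum_eq_zero_iff_of_nonneg
        (fun i (_ : i ∈ Finset.univ) => sq_nonneg (g i))).mp h3 j (Finset.mem_univ j)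
      exact pow_eq_zero_iff (by norm_num) |>.mp this
end

section
/- Let H be a Hilbert space, (u_j)_{j∈J} an orthonormal family with card J = N, and (v_j)_{j∈J} vectors with max_j ‖u_j − v_j‖ ≤ ε where ε := √(1+1/(2N)) − 1. Then for any w in the span of (v_j) with ‖w‖ = 1, writing w = Σ_{j∈J} γ_j v_j, the coefficients satisfy Σ_{j∈J} γ_j² ≤ 2 + 4N. -/
open scoped RealInnerProductSpace

theorem stmt_2 {H : Type*} [NormedAddCommGroup H] [InnerProductSpace ℝ H]
    {J : Type*} [Fintype J] (u v : J → H) (hu : Orthonormal ℝ u)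
    (N : ℕ) (hN : Fintype.card J = N)
    (hclose : ∀ j, ‖u j - v j‖ ≤ Real.sqrt (1 + 1 / (2 * (N : ℝ))) - 1)
    (w : H) (γ : J → ℝ) (hw : w = ∑ j, γ j • v j) (hwn : ‖w‖ = 1) :
    ∑ j, (γ j) ^ 2 ≤ 2 + 4 * (N : ℝ) := by
  rcases Nat.eq_zero_or_pos N with h0 | hNpos
  · subst h0
    have : IsEmpty J := Fintype.card_eq_zero_iff.mp hN
    simp only [Finset.univ_eq_empty, Finset.sum_empty]
    norm_num
  · have hN1 : (1:ℝ) ≤ (N:ℝ) := by exact_mod_cast hNpos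
    obtain ⟨ε, hεdef⟩ : ∃ e : ℝ, e = Real.sqrt (1 + 1 / (2 * (N : ℝ))) - 1 := ⟨_, rfl⟩
    simp only [← hεdef] at hclose
    have hεnn : 0 ≤ ε := by
      have h1 : Real.sqrt 1 ≤ Real.sqrt (1 + 1 / (2 * (N:ℝ))) := by
        apply Real.sqrt_le_sqrt; have : 0 ≤ 1 / (2 * (N:ℝ)) := by positivity
        linarith
      rw [Real.sqrt_one] at h1; linarith
    have hεle : ε ≤ 1 / (4 * (N:ℝ)) := by
      have h2 : Real.sqrt (1 + 1 / (2 * (N:ℝ))) ≤ 1 + 1 / (4 * (N:ℝ)) := by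
        have h3 : (1 + 1 / (2 * (N:ℝ))) ≤ (1 + 1 / (4 * (N:ℝ)))^2 := by
          have h4 : 0 < (N:ℝ) := by linarith
          have h5 : (0:ℝ) ≤ 1 / (4 * (N:ℝ)) := by positivity
          have h6 : 1 / (2 * (N:ℝ)) = 2 * (1 / (4 * (N:ℝ))) := by
            field_simp; ring
          nlinarith
        calc Real.sqrt (1 + 1 / (2 * (N:ℝ))) ≤ Real.sqrt ((1 + 1 / (4 * (N:ℝ)))^2) :=
              Real.sqrt_le_sqrt h3
          _ = 1 + 1 / (4 * (N:ℝ)) := Real.sqrt_sq (by positivity)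
      linarith
    obtain ⟨S, hSdef⟩ : ∃ e : ℝ, e = ∑ j, (γ j)^2 := ⟨_, rfl⟩
    have hSnn : 0 ≤ S := hSdef ▸ Finset.sum_nonneg fun j _ => sq_nonneg _
    obtain ⟨s, hsdef⟩ : ∃ e : ℝ, e = Real.sqrt S := ⟨_, rfl⟩
    have hsnn : 0 ≤ s := hsdef ▸ Real.sqrt_nonneg _
    have hs2 : s^2 = S := hsdef ▸ Real.sq_sqrt hSnn
    -- norm of ∑ γ j • u j
    have hnorm : ‖∑ j, γ j • u j‖ = s := by
      have := hu.inner_sum γ γ Finset.univ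
      have h7 : ⟪∑ j, γ j • u j, ∑ j, γ j • u j⟫ = S := by
        rw [this, hSdef]; simp [sq]
      have h8 : ‖∑ j, γ j • u j‖^2 = S := by
        rw [← h7, real_inner_self_eq_norm_sq]
      rw [hsdef, ← h8, Real.sqrt_sq (norm_nonneg _)]
    -- decomposition
    have hdec : ∑ j, γ j • u j = w + ∑ j, γ j • (u j - v j) := by
      rw [hw, ← Finset.sum_add_distrib]
      congr 1; ext j; rw [smul_sub]; abel
    -- bound ‖∑ γ j • (u j - v j)‖
    have habs : ∀ j : J, |γ j| = ‖γ j‖ := fun j => rfl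
    have hCS : (∑ j, |γ j|) ≤ Real.sqrt (N:ℝ) * s := by
      have h9 : (∑ j, |γ j|)^2 ≤ (N:ℝ) * S := by
        have := sq_sum_le_card_mul_sum_sq (s := (Finset.univ : Finset J)) (f := fun j => |γ j|)
        simp only [Finset.card_univ, hN, sq_abs] at this
        rw [hSdef]; exact_mod_cast this
      calc (∑ j, |γ j|) = Real.sqrt ((∑ j, |γ j|)^2) :=
            (Real.sqrt_sq (Finset.sum_nonneg fun j _ => abs_nonneg _)).symm
        _ ≤ Real.sqrt ((N:ℝ) * S) := Real.sqrt_le_sqrt h9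
        _ = Real.sqrt (N:ℝ) * s := by rw [Real.sqrt_mul (by positivity), hsdef]
    have herr : ‖∑ j, γ j • (u j - v j)‖ ≤ ε * (Real.sqrt (N:ℝ) * s) := by
      calc ‖∑ j, γ j • (u j - v j)‖ ≤ ∑ j, ‖γ j • (u j - v j)‖ := norm_sum_le _ _
        _ ≤ ∑ j, |γ j| * ε := by
            apply Finset.sum_le_sum; intro j _
            rw [norm_smul]
            exact mul_le_mul_of_nonneg_left (hclose j) (norm_nonneg _)
        _ = (∑ j, |γ j|) * ε := by rw [← Finset.sum_mul]
        _ ≤ (Real.sqrt (N:ℝ) * s) * ε := by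
            apply mul_le_mul_of_nonneg_right hCS hεnn
        _ = ε * (Real.sqrt (N:ℝ) * s) := by ring
    -- s ≤ 1 + ε √N s
    have hkey : s ≤ 1 + ε * (Real.sqrt (N:ℝ) * s) := by
      calc s = ‖∑ j, γ j • u j‖ := hnorm.symm
        _ ≤ ‖w‖ + ‖∑ j, γ j • (u j - v j)‖ := by rw [hdec]; exact norm_add_le _ _
        _ ≤ 1 + ε * (Real.sqrt (N:ℝ) * s) := by rw [hwn]; linarith
    -- ε √N ≤ 1/4
    have hsqrtN : Real.sqrt (N:ℝ) ≤ (N:ℝ) := by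
      have := Real.sqrt_le_sqrt (show (N:ℝ) ≤ (N:ℝ)^2 by nlinarith)
      rwa [Real.sqrt_sq (by linarith)] at this
    have hεN : ε * Real.sqrt (N:ℝ) ≤ 1/4 := by
      have h10 : ε * Real.sqrt (N:ℝ) ≤ (1 / (4 * (N:ℝ))) * (N:ℝ) := by
        apply mul_le_mul hεle hsqrtN (Real.sqrt_nonneg _) (by positivity)
      have h11 : (1 / (4 * (N:ℝ))) * (N:ℝ) = 1/4 := by field_simp
      linarith
    have h12 : ε * (Real.sqrt (N:ℝ) * s) = (ε * Real.sqrt (N:ℝ)) * s := (mul_assoc _ _ _).symm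
    have h13 : (ε * Real.sqrt (N:ℝ)) * s ≤ (1/4) * s := mul_le_mul_of_nonneg_right hεN hsnn
    have hsle : s ≤ 4/3 := by linarith
    nlinarith
end

section
/- Let H be a Hilbert space, W a finite-dimensional subspace, W_ℓ another subspace of the same dimension, E_ℓ the orthogonal projection onto W_ℓ, and F_ℓ = E_ℓ|_W : W → W_ℓ. If δ := sup_{u∈W, ‖u‖=1} inf_{v∈W_ℓ} ‖u − v‖ ≤ 1/2, then F_ℓ is a bijection from W onto W_ℓ, ‖F_ℓ^{-1}‖ ≤ 2, and sup_{x∈W_ℓ, ‖x‖=1} ‖F_ℓ^{-1}x − x‖ ≤ C δ for an absolute constant C. -/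
/-!
Since `E_ℓ y` is the best approximation of `y` in `W_ℓ`, homogeneity of the gap gives
`‖y - E_ℓ y‖ ≤ δ ‖y‖` on `W`, hence `‖y‖ / 2 ≤ (1 - δ) ‖y‖ ≤ ‖E_ℓ y‖` for `δ ≤ 1/2`. So `F_ℓ` is
injective with `‖F_ℓ⁻¹‖ ≤ 2`, and bijective because `dim W = dim W_ℓ`. Finally, for `F_ℓ y = x`
with `‖x‖ = 1`, `‖y - x‖ ≤ δ ‖y‖ ≤ 2δ`.
-/

namespace Submodule

variable {H : Type*} [NormedAddCommGroup H] [InnerProductSpace ℝ H]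
  (K : Submodule ℝ H) [K.HasOrthogonalProjection]

theorem norm_sub_orthogonalProjectionOnto_eq_infDist (u : H) :
    ‖u - K.orthogonalProjectionOnto u‖ = Metric.infDist u K := by
  rw [Metric.infDist_eq_iInf, ← starProjection_apply, starProjection_minimal]
  simp_rw [dist_eq_norm]
  rfl

theorem norm_sub_orthogonalProjectionOnto_le {W : Submodule ℝ H} {δ : ℝ}
    (hδ : ∀ u ∈ W, ‖u‖ = 1 → Metric.infDist u K ≤ δ) {y : H} (hy : y ∈ W) :
    ‖y - K.orthogonalProjectionOnto y‖ ≤ δ * ‖y‖ := by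
  rcases eq_or_ne y 0 with rfl | hy0
  · simp
  have hpos : 0 < ‖y‖ := norm_pos_iff.mpr hy0
  set u := ‖y‖⁻¹ • y
  have hu : ‖u‖ = 1 := by rw [norm_smul, norm_inv, norm_norm, inv_mul_cancel₀ hpos.ne']
  have hscale :
      ‖u - K.orthogonalProjectionOnto u‖ = ‖y‖⁻¹ * ‖y - K.orthogonalProjectionOnto y‖ := by
    rw [map_smul, coe_smul, ← smul_sub, norm_smul, norm_inv, norm_norm]
  have hu_le := hδ u (W.smul_mem _ hy) hu
  rw [← norm_sub_orthogonalProjectionOnto_eq_infDist, hscale, inv_mul_le_iff₀ hpos] at hu_le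
  linarith

end Submodule

theorem norm_le_two_mul_norm_of_norm_sub_le {E : Type*} [SeminormedAddCommGroup E] {x p : E}
    {δ : ℝ} (hδ : δ ≤ 1 / 2) (h : ‖x - p‖ ≤ δ * ‖x‖) : ‖x‖ ≤ 2 * ‖p‖ := by
  nlinarith [norm_le_norm_sub_add x p, norm_nonneg x]

theorem stmt_7_general {H : Type*} [NormedAddCommGroup H] [InnerProductSpace ℝ H]
    (W Wl : Submodule ℝ H)
    [FiniteDimensional ℝ W] [FiniteDimensional ℝ Wl]
    (hdim : Module.finrank ℝ W = Module.finrank ℝ Wl)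
    (δ : ℝ)
    (hδ : ∀ u ∈ W, ‖u‖ = 1 → Metric.infDist u (Wl : Set H) ≤ δ)
    (hδsmall : δ ≤ 1 / 2)
    (F : W →L[ℝ] Wl)
    (hF : ∀ y : W, (F y : H) = (Submodule.orthogonalProjectionOnto Wl (y : H) : H)) :
    Function.Bijective F ∧
    (∀ y : W, ‖y‖ ≤ 2 * ‖F y‖) ∧
    ∃ C : ℝ, 0 < C ∧
      ∀ x : Wl, ‖(x : H)‖ = 1 → ∀ y : W, F y = x → ‖(y : H) - (x : H)‖ ≤ C * δ := by
  have hclose (y : W) : ‖(y : H) - F y‖ ≤ δ * ‖y‖ :=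
    hF y ▸ Wl.norm_sub_orthogonalProjectionOnto_le hδ y.2
  have hlow (y : W) : ‖y‖ ≤ 2 * ‖F y‖ := norm_le_two_mul_norm_of_norm_sub_le hδsmall (hclose y)
  have hinj : Function.Injective F :=
    (F.antilipschitz_of_bound (K := 2) fun y => mod_cast hlow y).injective
  have hsurj : Function.Surjective F :=
    (LinearMap.injective_iff_surjective_of_finrank_eq_finrank hdim).mp hinj
  refine ⟨⟨hinj, hsurj⟩, hlow, 2, two_pos, fun x hx y hy => ?_⟩
  have hy2 : ‖y‖ ≤ 2 := by simpa [hy, hx] using hlow y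
  have hxy : ‖(y : H) - x‖ ≤ δ * ‖y‖ := hy ▸ hclose y
  have hδ0 : 0 ≤ δ := by
    have hypos : 0 < ‖y‖ := norm_pos_iff.mpr fun h => by simp [h, ← hy] at hx
    exact nonneg_of_mul_nonneg_left ((norm_nonneg _).trans hxy) hypos
  nlinarith

/-- Proposition 4.1: if the gap δ(W,W_ℓ) ≤ 1/2 then
F_ℓ = E_ℓ|_W : W → W_ℓ is a bijection, ‖F_ℓ⁻¹‖ ≤ 2, and
‖F_ℓ⁻¹ x − x‖ ≤ C δ for unit vectors x ∈ W_ℓ. -/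
theorem stmt_7 {H : Type*} [NormedAddCommGroup H] [InnerProductSpace ℝ H]
    [CompleteSpace H] (W Wl : Submodule ℝ H)
    [FiniteDimensional ℝ W] [FiniteDimensional ℝ Wl]
    (hdim : Module.finrank ℝ W = Module.finrank ℝ Wl)
    (δ : ℝ)
    (hδ : ∀ u ∈ W, ‖u‖ = 1 → Metric.infDist u (Wl : Set H) ≤ δ)
    (hδsmall : δ ≤ 1 / 2)
    (F : W →L[ℝ] Wl)
    (hF : ∀ y : W, (F y : H) = (Submodule.orthogonalProjectionOnto Wl (y : H) : H)) :
    Function.Bijective F ∧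
    (∀ y : W, ‖y‖ ≤ 2 * ‖F y‖) ∧
    ∃ C : ℝ, 0 < C ∧
      ∀ x : Wl, ‖(x : H)‖ = 1 → ∀ y : W, F y = x → ‖(y : H) - (x : H)‖ ≤ C * δ :=
  stmt_7_general W Wl hdim δ hδ hδsmall F hF
end

section
/- Suppose nonnegative sequences (μ_ℓ), (e_ℓ) satisfy: (estimator reduction) μ_{ℓ+1}² + K₁(1−q) e_{ℓ+1}² ≤ ρ₁ μ_ℓ² + K₁(1+q) e_ℓ² for constants ρ₁ ∈ (0,1), K₁ > 0, q ∈ [0, 1/2); and (reliability) e_ℓ² ≤ C_rel² μ_ℓ². Then for every ε ∈ (0,1) with ρ₂ := max{ρ₁ + ε C_rel² K₁, (1−ε+q)/(1−q)} < 1, the quantity ξ_ℓ² := μ_ℓ² + β e_ℓ² with β = K₁(1−q) satisfies ξ_{ℓ+1}² ≤ ρ₂ ξ_ℓ². -/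
/-! The reduction step gives `K₁(1+q) e²` on the right; split off `ε K₁ e²` and absorb it into
the estimator via reliability, while the remaining `K₁(1-ε+q) e²` is a `ρ₂`-fraction of
`β e² = K₁(1-q) e²` by the choice of `ρ₂`. -/

theorem estimator_error_contraction {a b a' b' ρ₁ K q C ε ρ₂ : ℝ}
    (ha : 0 ≤ a) (hb : 0 ≤ b) (hK : 0 ≤ K) (hq : q < 1) (hε : 0 ≤ ε)
    (hred : a' + K * (1 - q) * b' ≤ ρ₁ * a + K * (1 + q) * b)
    (hrel : b ≤ C ^ 2 * a)
    (hρ₂_est : ρ₁ + ε * C ^ 2 * K ≤ ρ₂) (hρ₂_err : (1 - ε + q) / (1 - q) ≤ ρ₂) :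
    a' + K * (1 - q) * b' ≤ ρ₂ * (a + K * (1 - q) * b) := by
  have hq' : 0 < 1 - q := sub_pos.mpr hq
  have hKb : 0 ≤ K * b := mul_nonneg hK hb
  have herr : 1 - ε + q ≤ ρ₂ * (1 - q) := (div_le_iff₀ hq').mp hρ₂_err
  calc a' + K * (1 - q) * b'
      ≤ ρ₁ * a + ε * K * b + (1 - ε + q) * (K * b) := by linarith
    _ ≤ ρ₁ * a + ε * K * (C ^ 2 * a) + ρ₂ * (1 - q) * (K * b) := by gcongr
    _ ≤ ρ₂ * a + ρ₂ * (1 - q) * (K * b) := by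
        have hρ₂a : (ρ₁ + ε * C ^ 2 * K) * a ≤ ρ₂ * a :=
          mul_le_mul_of_nonneg_right hρ₂_est ha
        linarith
    _ = ρ₂ * (a + K * (1 - q) * b) := by ring

theorem stmt_10_general (μ e : ℕ → ℝ)
    (ρ₁ K₁ q Crel ε : ℝ)
    (hK₁ : 0 < K₁)
    (hq : q ∈ Set.Ico (0 : ℝ) (1 / 2))
    (hred : ∀ ℓ, μ (ℓ + 1) ^ 2 + K₁ * (1 - q) * e (ℓ + 1) ^ 2
        ≤ ρ₁ * μ ℓ ^ 2 + K₁ * (1 + q) * e ℓ ^ 2)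
    (hrel : ∀ ℓ, e ℓ ^ 2 ≤ Crel ^ 2 * μ ℓ ^ 2)
    (hε : ε ∈ Set.Ioo (0 : ℝ) 1)
    (ρ₂ : ℝ)
    (hρ₂ : ρ₂ = max (ρ₁ + ε * Crel ^ 2 * K₁) ((1 - ε + q) / (1 - q)))
    (β : ℝ) (hβ : β = K₁ * (1 - q))
    (ξ : ℕ → ℝ) (hξ : ∀ ℓ, ξ ℓ ^ 2 = μ ℓ ^ 2 + β * e ℓ ^ 2) :
    ∀ ℓ, ξ (ℓ + 1) ^ 2 ≤ ρ₂ * ξ ℓ ^ 2 := by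
  intro ℓ
  rw [hξ, hξ, hβ]
  exact estimator_error_contraction (sq_nonneg _) (sq_nonneg _) hK₁.le (by linarith [hq.2])
    hε.1.le (hred ℓ) (hrel ℓ) (hρ₂ ▸ le_max_left _ _) (hρ₂ ▸ le_max_right _ _)

/-- abstract contraction, Proposition 5.9. -/
theorem stmt_10 (μ e : ℕ → ℝ) (hμ : ∀ ℓ, 0 ≤ μ ℓ) (he : ∀ ℓ, 0 ≤ e ℓ)
    (ρ₁ K₁ q Crel ε : ℝ)
    (hρ₁ : ρ₁ ∈ Set.Ioo (0 : ℝ) 1) (hK₁ : 0 < K₁)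
    (hq : q ∈ Set.Ico (0 : ℝ) (1 / 2))
    (hred : ∀ ℓ, μ (ℓ + 1) ^ 2 + K₁ * (1 - q) * e (ℓ + 1) ^ 2
        ≤ ρ₁ * μ ℓ ^ 2 + K₁ * (1 + q) * e ℓ ^ 2)
    (hrel : ∀ ℓ, e ℓ ^ 2 ≤ Crel ^ 2 * μ ℓ ^ 2)
    (hε : ε ∈ Set.Ioo (0 : ℝ) 1)
    (ρ₂ : ℝ)
    (hρ₂ : ρ₂ = max (ρ₁ + ε * Crel ^ 2 * K₁) ((1 - ε + q) / (1 - q)))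
    (hρ₂lt : ρ₂ < 1)
    (β : ℝ) (hβ : β = K₁ * (1 - q))
    (ξ : ℕ → ℝ) (hξ : ∀ ℓ, ξ ℓ ^ 2 = μ ℓ ^ 2 + β * e ℓ ^ 2) :
    ∀ ℓ, ξ (ℓ + 1) ^ 2 ≤ ρ₂ * ξ ℓ ^ 2 :=
  stmt_10_general μ e ρ₁ K₁ q Crel ε hK₁ hq hred hrel hε ρ₂ hρ₂ β hβ ξ hξ
end
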